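/- Let 𝒴 be a finite alphabet and let A, B be probability mass functions on 𝒴 with A(y) > 0 and B(y) > 0 for all y. For α ≥ 1 define f(A,B,α) := sup { (α−1)·h(β) + h((α−1)·β) − d_{(α−1)β}(A‖B) − (α−1)·d_β(B‖A) : β ∈ [0,1], (α−1)·β ≤ 1 }. Then f(A,B,α) is nondecreasing in α: for all 1 ≤ α₁ ≤ α₂, f(A,B,α₁) ≤ f(A,B,α₂). -/
import Mathlib


/-- A probability mass function on a finite alphabet. -/
def IsPMF {X : Type*} [Fintype X] (P : X → ℝ) : Prop :=
  (∀ x, 0 ≤ P x) ∧ ∑ x, P x = 1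

/-- Kullback–Leibler divergence (natural logarithm, with the convention
`0 · log (0/q) = 0`). -/
noncomputable def KLdiv {X : Type*} [Fintype X] (P Q : X → ℝ) : ℝ :=
  ∑ x, P x * Real.log (P x / Q x)

/-- Partial divergence between `P` and `Q` with mismatch ratio `ρ`. -/
noncomputable def partialDiv {X : Type*} [Fintype X] (ρ : ℝ) (P Q : X → ℝ) : ℝ :=
  sInf { v : ℝ | ∃ P₁ P₂ : X → ℝ, IsPMF P₁ ∧ IsPMF P₂ ∧
    (∀ x, ρ * P₁ x + (1 - ρ) * P₂ x = P x) ∧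
    v = ρ * KLdiv P₁ Q + (1 - ρ) * KLdiv P₂ P }

/-- Binary entropy function (natural logarithm). -/
noncomputable def binEnt (p : ℝ) : ℝ :=
  -(p * Real.log p) - (1 - p) * Real.log (1 - p)


lemma binEnt_eq (p : ℝ) : binEnt p = Real.binEntropy p := by
  simp [binEnt, Real.binEntropy, Real.log_inv]; ring

lemma binEnt_zero : binEnt 0 = 0 := by simp [binEnt]

lemma binEnt_le_log_two (p : ℝ) : binEnt p ≤ Real.log 2 := by
  rw [binEnt_eq]; exact Real.binEntropy_le_log_two

lemma binEnt_smul {l x : ℝ} (hl0 : 0 ≤ l) (hl1 : l ≤ 1) (hx0 : 0 ≤ x) (hx1 : x ≤ 1) :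
    l * binEnt x ≤ binEnt (l * x) := by
  have hc := Real.strictConcave_binEntropy.concaveOn
  have h := hc.2 (Set.mem_Icc.2 ⟨hx0, hx1⟩) (Set.mem_Icc.2 ⟨le_refl 0, zero_le_one⟩)
    hl0 (sub_nonneg.2 hl1) (by ring)
  simp only [smul_eq_mul, Real.binEntropy_zero, mul_zero, add_zero] at h
  rw [binEnt_eq, binEnt_eq]
  simpa using h

lemma KLdiv_self {X : Type*} [Fintype X] (P : X → ℝ) : KLdiv P P = 0 := by
  unfold KLdiv
  apply Finset.sum_eq_zero
  intro x _
  rcases eq_or_ne (P x) 0 with h | h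
  · simp [h]
  · simp [div_self h]

lemma term_lb {p q : ℝ} (hp : 0 ≤ p) (hq : 0 < q) : p - q ≤ p * Real.log (p / q) := by
  rcases eq_or_lt_of_le hp with h | h
  · simp [← h]; linarith
  · have h1 := Real.log_le_sub_one_of_pos (show 0 < q / p by positivity)
    have h2 : Real.log (q / p) = -Real.log (p / q) := by
      rw [← Real.log_inv]; congr 1; field_simp
    rw [h2] at h1
    have h3 : q / p * p = q := by field_simp
    nlinarith

lemma KLdiv_nonneg {X : Type*} [Fintype X] {P Q : X → ℝ} (hP : IsPMF P) (hQ : IsPMF Q)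
    (hQpos : ∀ x, 0 < Q x) : 0 ≤ KLdiv P Q := by
  have h : ∑ x, (P x - Q x) ≤ KLdiv P Q :=
    Finset.sum_le_sum fun x _ => term_lb (hP.1 x) (hQpos x)
  rw [Finset.sum_sub_distrib, hP.2, hQ.2] at h
  linarith

/-- elements of the partialDiv set are nonneg -/
lemma partialDiv_set_nonneg {X : Type*} [Fintype X] {ρ : ℝ} {P Q : X → ℝ}
    (hρ0 : 0 ≤ ρ) (hρ1 : ρ ≤ 1) (hP : IsPMF P) (hQ : IsPMF Q)
    (hPpos : ∀ x, 0 < P x) (hQpos : ∀ x, 0 < Q x) :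
    ∀ v ∈ { v : ℝ | ∃ P₁ P₂ : X → ℝ, IsPMF P₁ ∧ IsPMF P₂ ∧
      (∀ x, ρ * P₁ x + (1 - ρ) * P₂ x = P x) ∧
      v = ρ * KLdiv P₁ Q + (1 - ρ) * KLdiv P₂ P }, 0 ≤ v := by
  rintro v ⟨P₁, P₂, h1, h2, hmix, rfl⟩
  have k1 := KLdiv_nonneg h1 hQ hQpos
  have k2 := KLdiv_nonneg h2 hP hPpos
  nlinarith

lemma partialDiv_nonneg {X : Type*} [Fintype X] {ρ : ℝ} {P Q : X → ℝ}
    (hρ0 : 0 ≤ ρ) (hρ1 : ρ ≤ 1) (hP : IsPMF P) (hQ : IsPMF Q)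
    (hPpos : ∀ x, 0 < P x) (hQpos : ∀ x, 0 < Q x) :
    0 ≤ partialDiv ρ P Q :=
  Real.sInf_nonneg (partialDiv_set_nonneg hρ0 hρ1 hP hQ hPpos hQpos)

lemma partialDiv_set_nonempty {X : Type*} [Fintype X] {ρ : ℝ} {P Q : X → ℝ} (hP : IsPMF P) :
    (ρ * KLdiv P Q) ∈ { v : ℝ | ∃ P₁ P₂ : X → ℝ, IsPMF P₁ ∧ IsPMF P₂ ∧
      (∀ x, ρ * P₁ x + (1 - ρ) * P₂ x = P x) ∧
      v = ρ * KLdiv P₁ Q + (1 - ρ) * KLdiv P₂ P } :=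
  ⟨P, P, hP, hP, fun x => by ring, by rw [KLdiv_self]; ring⟩

lemma mul_log_div_eq {t b : ℝ} (ht : 0 ≤ t) (hb : 0 < b) :
    t * Real.log (t / b) = t * Real.log t - t * Real.log b := by
  rcases eq_or_lt_of_le ht with h | h
  · simp [← h]
  · rw [Real.log_div (ne_of_gt h) (ne_of_gt hb)]; ring

/-- pointwise convexity step: KL-term of a mixture with the reference -/
lemma mix_term_le {θ p b : ℝ} (hθ0 : 0 ≤ θ) (hθ1 : θ ≤ 1) (hp : 0 ≤ p) (hb : 0 < b) :
    (θ * p + (1 - θ) * b) * Real.log ((θ * p + (1 - θ) * b) / b)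
      ≤ θ * (p * Real.log (p / b)) := by
  have hm : 0 ≤ θ * p + (1 - θ) * b := by nlinarith
  have hconv := Real.convexOn_mul_log.2 (Set.mem_Ici.2 hp) (Set.mem_Ici.2 hb.le)
    hθ0 (sub_nonneg.2 hθ1) (by ring)
  simp only [smul_eq_mul] at hconv
  rw [mul_log_div_eq hm hb, mul_log_div_eq hp hb]
  nlinarith [hconv]

lemma KLdiv_mix_le {X : Type*} [Fintype X] {θ : ℝ} {P₂ P : X → ℝ}
    (hθ0 : 0 ≤ θ) (hθ1 : θ ≤ 1) (h2 : IsPMF P₂) (hPpos : ∀ x, 0 < P x) :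
    KLdiv (fun x => θ * P₂ x + (1 - θ) * P x) P ≤ θ * KLdiv P₂ P := by
  unfold KLdiv
  rw [Finset.mul_sum]
  exact Finset.sum_le_sum fun x _ => mix_term_le hθ0 hθ1 (h2.1 x) (hPpos x)

lemma partialDiv_scale {X : Type*} [Fintype X] {l ρ : ℝ} {P Q : X → ℝ}
    (hl0 : 0 ≤ l) (hl1 : l ≤ 1) (hρ0 : 0 ≤ ρ) (hρ1 : ρ ≤ 1)
    (hP : IsPMF P) (hQ : IsPMF Q) (hPpos : ∀ x, 0 < P x) (hQpos : ∀ x, 0 < Q x) :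
    partialDiv (l * ρ) P Q ≤ l * partialDiv ρ P Q := by
  rcases eq_or_lt_of_le hl1 with rfl | hl
  · simp
  -- l < 1
  have hlρ0 : 0 ≤ l * ρ := mul_nonneg hl0 hρ0
  have hd : 0 < 1 - l * ρ := by nlinarith
  have key : ∀ v ∈ { v : ℝ | ∃ P₁ P₂ : X → ℝ, IsPMF P₁ ∧ IsPMF P₂ ∧
      (∀ x, ρ * P₁ x + (1 - ρ) * P₂ x = P x) ∧
      v = ρ * KLdiv P₁ Q + (1 - ρ) * KLdiv P₂ P }, partialDiv (l * ρ) P Q ≤ l * v := by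
    rintro v ⟨P₁, P₂, h1, h2, hmix, rfl⟩
    set θ : ℝ := l * (1 - ρ) / (1 - l * ρ) with hθdef
    have hθ0 : 0 ≤ θ := by
      apply div_nonneg _ hd.le; nlinarith
    have hθ1 : θ ≤ 1 := by
      rw [div_le_one hd]; nlinarith
    have hθe : (1 - l * ρ) * θ = l * (1 - ρ) := by
      rw [hθdef]
      field_simp
    set P₂' : X → ℝ := fun x => θ * P₂ x + (1 - θ) * P x with hP₂'
    have h2' : IsPMF P₂' := by
      constructor
      · intro x
        show 0 ≤ θ * P₂ x + (1 - θ) * P x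
        have := h2.1 x; have := (hPpos x).le
        nlinarith
      · show ∑ x, (θ * P₂ x + (1 - θ) * P x) = 1
        rw [Finset.sum_add_distrib, ← Finset.mul_sum, ← Finset.mul_sum, h2.2, hP.2]
        ring
    have hmix' : ∀ x, (l * ρ) * P₁ x + (1 - l * ρ) * P₂' x = P x := by
      intro x
      have hx := hmix x
      show (l * ρ) * P₁ x + (1 - l * ρ) * (θ * P₂ x + (1 - θ) * P x) = P x
      linear_combination l * hx + (P₂ x - P x) * hθe
    have hmem : (l * ρ) * KLdiv P₁ Q + (1 - l * ρ) * KLdiv P₂' P ∈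
        { v : ℝ | ∃ P₁ P₂ : X → ℝ, IsPMF P₁ ∧ IsPMF P₂ ∧
          (∀ x, (l * ρ) * P₁ x + (1 - (l * ρ)) * P₂ x = P x) ∧
          v = (l * ρ) * KLdiv P₁ Q + (1 - (l * ρ)) * KLdiv P₂ P } :=
      ⟨P₁, P₂', h1, h2', hmix', rfl⟩
    have hbdd : BddBelow { v : ℝ | ∃ P₁ P₂ : X → ℝ, IsPMF P₁ ∧ IsPMF P₂ ∧
        (∀ x, (l * ρ) * P₁ x + (1 - (l * ρ)) * P₂ x = P x) ∧
        v = (l * ρ) * KLdiv P₁ Q + (1 - (l * ρ)) * KLdiv P₂ P } :=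
      ⟨0, fun v hv => partialDiv_set_nonneg hlρ0 (by nlinarith) hP hQ hPpos hQpos v hv⟩
    have hle : partialDiv (l * ρ) P Q ≤ (l * ρ) * KLdiv P₁ Q + (1 - l * ρ) * KLdiv P₂' P :=
      csInf_le hbdd hmem
    have hKL : KLdiv P₂' P ≤ θ * KLdiv P₂ P := KLdiv_mix_le hθ0 hθ1 h2 hPpos
    have h5 := mul_le_mul_of_nonneg_left hKL hd.le
    have h6 : (1 - l * ρ) * (θ * KLdiv P₂ P) = l * ((1 - ρ) * KLdiv P₂ P) := by
      rw [← mul_assoc, hθe, mul_assoc]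
    have h7 : l * (ρ * KLdiv P₁ Q + (1 - ρ) * KLdiv P₂ P)
        = l * ρ * KLdiv P₁ Q + l * ((1 - ρ) * KLdiv P₂ P) := by ring
    rw [h7, ← h6]
    linarith [hle, h5]
  have hne : { v : ℝ | ∃ P₁ P₂ : X → ℝ, IsPMF P₁ ∧ IsPMF P₂ ∧
      (∀ x, ρ * P₁ x + (1 - ρ) * P₂ x = P x) ∧
      v = ρ * KLdiv P₁ Q + (1 - ρ) * KLdiv P₂ P }.Nonempty :=
    ⟨_, partialDiv_set_nonempty (Q := Q) (ρ := ρ) hP⟩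
  rcases eq_or_lt_of_le hl0 with rfl | hlpos
  · obtain ⟨v, hv⟩ := hne
    have := key v hv
    simp only [zero_mul] at this ⊢
    exact this
  · have h1 : partialDiv (l * ρ) P Q / l ≤ partialDiv ρ P Q := by
      apply le_csInf hne
      intro b hb
      rw [div_le_iff₀ hlpos]
      calc partialDiv (l * ρ) P Q ≤ l * b := key b hb
        _ = b * l := mul_comm _ _
    calc partialDiv (l * ρ) P Q = l * (partialDiv (l * ρ) P Q / l) := by field_simp
      _ ≤ l * partialDiv ρ P Q := by
          exact mul_le_mul_of_nonneg_left h1 hl0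

lemma partialDiv_zero {X : Type*} [Fintype X] (P Q : X → ℝ) (hP : IsPMF P) :
    partialDiv 0 P Q = 0 := by
  unfold partialDiv
  have hset : { v : ℝ | ∃ P₁ P₂ : X → ℝ, IsPMF P₁ ∧ IsPMF P₂ ∧
      (∀ x, (0:ℝ) * P₁ x + (1 - 0) * P₂ x = P x) ∧
      v = 0 * KLdiv P₁ Q + (1 - 0) * KLdiv P₂ P } = {0} := by
    ext v
    simp only [Set.mem_setOf_eq, Set.mem_singleton_iff]
    constructor
    · rintro ⟨P₁, P₂, h1, h2, hmix, rfl⟩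
      have hP₂ : P₂ = P := funext fun x => by have := hmix x; linarith
      rw [hP₂, KLdiv_self]; ring
    · rintro rfl
      exact ⟨P, P, hP, hP, fun x => by ring, by rw [KLdiv_self]; ring⟩
  rw [hset, csInf_singleton]

/-- The overhead cost
`f(A,B,α) = sup { (α−1)h(β) + h((α−1)β) − d_{(α−1)β}(A‖B) − (α−1)d_β(B‖A) :
  β ∈ [0,1], (α−1)β ≤ 1 }`. -/
noncomputable def overhead {Y : Type*} [Fintype Y] (A B : Y → ℝ) (α : ℝ) : ℝ :=
  sSup { v : ℝ | ∃ β : ℝ, β ∈ Set.Icc (0 : ℝ) 1 ∧ (α - 1) * β ≤ 1 ∧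
    v = (α - 1) * binEnt β + binEnt ((α - 1) * β)
        - partialDiv ((α - 1) * β) A B - (α - 1) * partialDiv β B A }

/-- The overhead cost `f(A,B,α)` is nondecreasing in the intermittency rate `α`. -/
theorem overhead_monotone {Y : Type*} [Fintype Y] (A B : Y → ℝ)
    (hA : IsPMF A) (hB : IsPMF B)
    (hApos : ∀ y, 0 < A y) (hBpos : ∀ y, 0 < B y) :
    ∀ α₁ α₂ : ℝ, 1 ≤ α₁ → α₁ ≤ α₂ → overhead A B α₁ ≤ overhead A B α₂ := by
  have hbdd : ∀ α : ℝ, 1 ≤ α → BddAbove {v : ℝ | ∃ β : ℝ, β ∈ Set.Icc (0 : ℝ) 1 ∧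
      (α - 1) * β ≤ 1 ∧
      v = (α - 1) * binEnt β + binEnt ((α - 1) * β)
        - partialDiv ((α - 1) * β) A B - (α - 1) * partialDiv β B A} := by
    intro α hα
    refine ⟨(α - 1) * Real.log 2 + Real.log 2, ?_⟩
    rintro v ⟨β, hβ, hβ2, rfl⟩
    obtain ⟨hβ0, hβ1⟩ := Set.mem_Icc.1 hβ
    have hα1 : (0:ℝ) ≤ α - 1 := by linarith
    have hρ0 : 0 ≤ (α - 1) * β := mul_nonneg hα1 hβ0
    have d1 := partialDiv_nonneg hρ0 hβ2 hA hB hApos hBpos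
    have d2 := partialDiv_nonneg hβ0 hβ1 hB hA hBpos hApos
    have e1 := binEnt_le_log_two β
    have e2 := binEnt_le_log_two ((α - 1) * β)
    nlinarith [mul_le_mul_of_nonneg_left e1 hα1, mul_nonneg hα1 d2]
  intro α₁ α₂ h1 h12
  rcases eq_or_lt_of_le h12 with rfl | hlt
  · exact le_refl _
  have hα2 : 1 < α₂ := lt_of_le_of_lt h1 hlt
  have hd2 : (0:ℝ) < α₂ - 1 := by linarith
  have h11 : (0:ℝ) ≤ α₁ - 1 := by linarith
  set l : ℝ := (α₁ - 1) / (α₂ - 1) with hldef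
  have hl0 : 0 ≤ l := div_nonneg h11 hd2.le
  have hl1 : l ≤ 1 := by rw [hldef, div_le_one hd2]; linarith
  have hlmul : (α₂ - 1) * l = α₁ - 1 := by rw [hldef]; field_simp
  unfold overhead
  apply csSup_le
  · exact ⟨_, ⟨0, Set.mem_Icc.2 ⟨le_refl 0, zero_le_one⟩, by norm_num, rfl⟩⟩
  rintro v ⟨β, hβ, hβ2, rfl⟩
  obtain ⟨hβ0, hβ1⟩ := Set.mem_Icc.1 hβ
  have hids : (α₂ - 1) * (l * β) = (α₁ - 1) * β := by rw [← mul_assoc, hlmul]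
  have hmem : ((α₂ - 1) * binEnt (l * β) + binEnt ((α₂ - 1) * (l * β))
      - partialDiv ((α₂ - 1) * (l * β)) A B - (α₂ - 1) * partialDiv (l * β) B A) ∈
      {v : ℝ | ∃ β : ℝ, β ∈ Set.Icc (0 : ℝ) 1 ∧ (α₂ - 1) * β ≤ 1 ∧
        v = (α₂ - 1) * binEnt β + binEnt ((α₂ - 1) * β)
          - partialDiv ((α₂ - 1) * β) A B - (α₂ - 1) * partialDiv β B A} :=
    ⟨l * β, Set.mem_Icc.2 ⟨mul_nonneg hl0 hβ0, by nlinarith⟩, by rw [hids]; exact hβ2, rfl⟩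
  refine le_trans ?_ (le_csSup (hbdd α₂ (by linarith)) hmem)
  rw [hids]
  have q1 := mul_le_mul_of_nonneg_left (binEnt_smul hl0 hl1 hβ0 hβ1) hd2.le
  have q2 := mul_le_mul_of_nonneg_left
    (partialDiv_scale hl0 hl1 hβ0 hβ1 hB hA hBpos hApos) hd2.le
  have r1 : (α₂ - 1) * (l * binEnt β) = (α₁ - 1) * binEnt β := by rw [← mul_assoc, hlmul]
  have r2 : (α₂ - 1) * (l * partialDiv β B A) = (α₁ - 1) * partialDiv β B A := by
    rw [← mul_assoc, hlmul]
  linarith
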